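/- Let G be a finite simple graph, ι an involutive automorphism of G, and A a connected nonempty set of vertices such that A is not of the form {v, ι(v)} for any vertex v with ι(v) ≠ v. Then there exists a connected set of vertices B such that A ∪ ι(A) = B ∪ ι(B) and for every v ∈ B with ι(v) ≠ v, ι(v) ∉ B. -/

import Mathlib

/-!
If a connected set `B` contains both `v` and `ι v ≠ v`, let `C` be the component of `ι v` in
`B \ {v}` and reflect the rest of `B \ {v}` through `ι`: `E = C ∪ ι '' ((B \ {v}) \ C)`.
Every vertex of `(B \ {v}) \ C` reaches `v` inside `B \ C`, so after reflection it reaches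
`ι v ∈ C` inside `E`. Hence `E` is connected, has the same `ι`-saturation as `B`, and is
smaller than `B`; iterate until no pair `v, ι v` is left.
-/

open Function Set

section Involutive

variable {α : Type*} {f : α → α}

lemma Function.Involutive.union_image_sdiff_singleton (hf : Involutive f) {B : Set α} {v : α}
    (h : f v ∈ B \ {v}) : (B \ {v}) ∪ f '' (B \ {v}) = B ∪ f '' B := by
  rw [hf.image_eq_preimage_symm] at *
  ext z
  simp only [mem_union, mem_preimage, mem_sdiff, mem_singleton_iff] at h ⊢
  grind [hf z]

lemma Function.Involutive.union_image_swap (hf : Involutive f) {C X : Set α} (hC : C ⊆ X) :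
    (C ∪ f '' (X \ C)) ∪ f '' (C ∪ f '' (X \ C)) = X ∪ f '' X := by
  rw [image_union, image_image, funext hf, image_id']
  calc _ = (C ∪ X \ C) ∪ f '' (C ∪ X \ C) := by rw [image_union]; ac_rfl
    _ = X ∪ f '' X := by rw [union_sdiff_cancel hC]

end Involutive

namespace SimpleGraph

variable {V : Type*} {G : SimpleGraph V}

lemma Connected.exists_walk_support_subset {s : Set V} (h : (G.induce s).Connected) {x y : V}
    (hx : x ∈ s) (hy : y ∈ s) : ∃ p : G.Walk x y, ∀ z ∈ p.support, z ∈ s := by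
  obtain ⟨p⟩ := h.preconnected ⟨x, hx⟩ ⟨y, hy⟩
  let q : G.Walk x y := p.map (Embedding.induce s).toHom
  have hq : q.support = p.support.map (↑) := Walk.support_map _ _
  refine ⟨q, fun z hz => ?_⟩
  rw [hq, List.mem_map] at hz
  obtain ⟨w, -, rfl⟩ := hz
  exact w.2

lemma connected_induce_of_forall_exists_walk {s : Set V} {u : V} (hu : u ∈ s)
    (h : ∀ x ∈ s, ∃ p : G.Walk u x, ∀ z ∈ p.support, z ∈ s) : (G.induce s).Connected :=
  G.induce_connected_of_patches u hu fun hx => by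
    obtain ⟨p, hp⟩ := h _ hx
    exact ⟨_, hp, p.start_mem_support, p.end_mem_support,
      p.connected_induce_support.preconnected _ _⟩

/-- The vertex set of the connected component of `x` in `G.induce s` (empty if `x ∉ s`). -/
def componentIn (G : SimpleGraph V) (s : Set V) (x : V) : Set V :=
  {y | ∃ p : G.Walk x y, ∀ z ∈ p.support, z ∈ s}

lemma componentIn_subset (s : Set V) (x : V) : G.componentIn s x ⊆ s :=
  fun _ ⟨p, hp⟩ => hp _ p.end_mem_support

lemma mem_componentIn_self {s : Set V} {x : V} (hx : x ∈ s) : x ∈ G.componentIn s x :=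
  ⟨Walk.nil, by simpa using hx⟩

lemma mem_componentIn_of_adj {s : Set V} {x a b : V} (hab : G.Adj a b)
    (hb : b ∈ G.componentIn s x) (ha : a ∈ s) : a ∈ G.componentIn s x := by
  obtain ⟨p, hp⟩ := hb
  refine ⟨p.concat hab.symm, fun z hz => ?_⟩
  rw [Walk.support_concat, List.mem_append, List.mem_singleton] at hz
  rcases hz with hz | rfl
  exacts [hp z hz, ha]

lemma Walk.support_subset_componentIn {s : Set V} {x y : V} (p : G.Walk x y)
    (hp : ∀ z ∈ p.support, z ∈ s) : ∀ z ∈ p.support, z ∈ G.componentIn s x := by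
  classical
  exact fun z hz =>
    ⟨p.takeUntil z hz, fun w hw => hp w (p.support_takeUntil_subset_support hz hw)⟩

/-- Cut `p` at its first visit to `v`: before that it cannot enter the component, which is
closed under adjacency in `S \ {v}`. -/
lemma Walk.exists_walk_sdiff_componentIn {S : Set V} {x u v : V} (p : G.Walk u v)
    (hp : ∀ z ∈ p.support, z ∈ S) (hu : u ∉ G.componentIn (S \ {v}) x) :
    ∃ q : G.Walk u v, ∀ z ∈ q.support, z ∈ S \ G.componentIn (S \ {v}) x := by
  suffices ∀ {w} (p : G.Walk u w), w = v → (∀ z ∈ p.support, z ∈ S) →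
      u ∉ G.componentIn (S \ {v}) x →
      ∃ q : G.Walk u v, ∀ z ∈ q.support, z ∈ S \ G.componentIn (S \ {v}) x from
    this p rfl hp hu
  clear p hp hu
  intro w p
  induction p with
  | nil =>
    rintro rfl hp hu
    exact ⟨Walk.nil, by simpa using ⟨hp _ (Walk.start_mem_support _), hu⟩⟩
  | @cons a b w hab p ih =>
    intro hw hp hu
    have haS := hp a (Walk.start_mem_support _)
    by_cases hav : a = v
    · subst hav
      exact ⟨Walk.nil, by simpa using ⟨haS, hu⟩⟩
    have hb : b ∉ G.componentIn (S \ {v}) x := fun hb =>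
      hu (mem_componentIn_of_adj hab hb ⟨haS, hav⟩)
    obtain ⟨q, hq⟩ := ih hw (fun z hz => hp z (List.mem_cons_of_mem _ hz)) hb
    refine ⟨Walk.cons hab q, fun z hz => ?_⟩
    rcases List.mem_cons.mp hz with rfl | hz
    exacts [⟨haS, hu⟩, hq z hz]

lemma connected_induce_componentIn_union_image {f : G →g G} {B : Set V}
    (hB : (G.induce B).Connected) {v : V} (hvB : v ∈ B) (hfv : f v ∈ B \ {v}) :
    (G.induce (G.componentIn (B \ {v}) (f v) ∪
      f '' ((B \ {v}) \ G.componentIn (B \ {v}) (f v)))).Connected := by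
  set C := G.componentIn (B \ {v}) (f v)
  have hfvC : f v ∈ C := mem_componentIn_self hfv
  refine connected_induce_of_forall_exists_walk (Or.inl hfvC) ?_
  rintro _ (hx | ⟨u, ⟨huB, huC⟩, rfl⟩)
  · obtain ⟨p, hp⟩ := hx
    exact ⟨p, fun z hz => Or.inl (p.support_subset_componentIn hp z hz)⟩
  · obtain ⟨p, hp⟩ := hB.exists_walk_support_subset huB.1 hvB
    obtain ⟨q, hq⟩ := p.exists_walk_sdiff_componentIn hp huC
    refine ⟨(q.map f).reverse, fun z hz => ?_⟩
    rw [Walk.support_reverse, List.mem_reverse, Walk.support_map, List.mem_map] at hz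
    obtain ⟨w, hw, rfl⟩ := hz
    by_cases hwv : w = v
    · exact Or.inl (hwv ▸ hfvC)
    · exact Or.inr ⟨w, ⟨⟨(hq w hw).1, hwv⟩, (hq w hw).2⟩, rfl⟩

lemma exists_connected_union_image_eq_ncard_lt {ι : G ≃g G} (hι : Involutive ι) {B : Set V}
    (hBfin : B.Finite) (hB : (G.induce B).Connected) {v : V} (hvB : v ∈ B)
    (hιv : ι v ∈ B \ {v}) :
    ∃ E : Set V, (G.induce E).Connected ∧ E ∪ ι '' E = B ∪ ι '' B ∧
      E.ncard < B.ncard := by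
  set C := G.componentIn (B \ {v}) (ι v)
  have hCB : C ⊆ B \ {v} := componentIn_subset _ _
  refine ⟨C ∪ ι '' ((B \ {v}) \ C),
    connected_induce_componentIn_union_image (f := ι.toHom) hB hvB hιv, ?_, ?_⟩
  · rw [hι.union_image_swap hCB, hι.union_image_sdiff_singleton hιv]
  · calc _ ≤ C.ncard + (ι '' ((B \ {v}) \ C)).ncard := ncard_union_le _ _
      _ = ((B \ {v}) \ C).ncard + C.ncard := by
        rw [ncard_image_of_injective _ ι.injective, add_comm]
      _ = (B \ {v}).ncard := ncard_sdiff_add_ncard_of_subset hCB (hBfin.subset sdiff_subset)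
      _ < B.ncard := ncard_sdiff_singleton_lt_of_mem hvB hBfin

end SimpleGraph

theorem stmt_5_general {V : Type*} [Fintype V] (G : SimpleGraph V) (ι : G ≃g G)
    (hinv : ∀ v, ι (ι v) = v)
    (A : Set V) (hA : (G.induce A).Connected) :
    ∃ B : Set V, (G.induce B).Connected ∧
      A ∪ (ι '' A) = B ∪ (ι '' B) ∧
      ∀ v ∈ B, ι v ≠ v → ι v ∉ B := by
  induction hn : A.ncard using Nat.strong_induction_on generalizing A with
  | _ n ih =>
    by_cases hfree : ∀ v ∈ A, ι v ≠ v → ι v ∉ A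
    · exact ⟨A, hA, rfl, hfree⟩
    push Not at hfree
    obtain ⟨v, hvA, hv, hιvA⟩ := hfree
    obtain ⟨E, hE, hEA, hlt⟩ :=
      SimpleGraph.exists_connected_union_image_eq_ncard_lt hinv A.toFinite hA hvA ⟨hιvA, hv⟩
    obtain ⟨B, hB, hBE, hBfree⟩ := ih _ (hn ▸ hlt) E hE rfl
    exact ⟨B, hB, hEA.symm.trans hBE, hBfree⟩

/-- given an involutive graph automorphism ι and a connected set A
not of the form {v, ι v}, there is a connected set B with A ∪ ι(A) = B ∪ ι(B)
and ι(v) ∉ B for every non-fixed v ∈ B. -/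
theorem stmt_5 {V : Type*} [Fintype V] (G : SimpleGraph V) (ι : G ≃g G)
    (hinv : ∀ v, ι (ι v) = v)
    (A : Set V) (hA : (G.induce A).Connected)
    (hshape : ∀ v : V, ι v ≠ v → A ≠ {v, ι v}) :
    ∃ B : Set V, (G.induce B).Connected ∧
      A ∪ (ι '' A) = B ∪ (ι '' B) ∧
      ∀ v ∈ B, ι v ≠ v → ι v ∉ B :=
  stmt_5_general G ι hinv A hA
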